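/- Let n ≥ 2 and let k, μ : ℝ^n → ℝ satisfy k(x) ≥ c₀ > 0 and μ(x) ≥ c₀ > 0 for all x. Define λ := k − 2μ/n and the tensor C^{1/2}_{ijlm} := λ δ_{ij}δ_{lm} + μ(δ_{il}δ_{jm} + δ_{im}δ_{jl}). Then for all x, y ∈ ℝ^n and all vectors v, w ∈ ℝ^n: C^{1/2}_{ijαβ}(x) C^{1/2}_{αβlm}(y) v_i w_j v_l w_m = (n k(x)k(y) + (2(n−2)/n) μ(x)μ(y)) (v·w)² + 2μ(x)μ(y) |v|²|w|², and hence this quantity is ≥ 2c₀² |v|²|w|². -/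

import Mathlib

/-- Kronecker delta. -/
def kron {n : ℕ} (i j : Fin n) : ℝ := if i = j then 1 else 0

/-- The isotropic fourth order tensor with Lamé-type parameters `lam, mu`. -/
def isoTensor (n : ℕ) (lam mu : ℝ) (i j l m : Fin n) : ℝ :=
  lam * kron i j * kron l m + mu * (kron i l * kron j m + kron i m * kron j l)

/-!
Isotropic tensors are closed under double contraction, so the left-hand side is the quadratic form
of a single isotropic tensor `(A, B)`, namely `A (v·w)² + B (|v|²|w|² + (v·w)²)`. With
`λ = k − 2μ/n` the total coefficient of `(v·w)²` is `n k k' + 2(n−2)/n μμ' ≥ 0`, which leaves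
`2μμ'|v|²|w|² ≥ 2c₀²|v|²|w|²`.
-/

open Finset

theorem isoTensor_contract (n : ℕ) (lam mu lam' mu' : ℝ) (i j l m : Fin n) :
    ∑ α, ∑ β, isoTensor n lam mu i j α β * isoTensor n lam' mu' α β l m
      = isoTensor n (n * lam * lam' + 2 * lam * mu' + 2 * mu * lam') (2 * mu * mu') i j l m := by
  simp only [isoTensor, kron, add_mul, mul_add, sum_add_distrib, mul_ite, ite_mul, mul_one,
    mul_zero, zero_mul, sum_ite_eq, sum_ite_eq', mem_univ, if_true, sum_ite_irrel,
    sum_const_zero, sum_const, card_univ, Fintype.card_fin, nsmul_eq_mul]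
  split_ifs <;> simp_all <;> ring

theorem sum_isoTensor_mul (n : ℕ) (lam mu : ℝ) (v w : Fin n → ℝ) :
    ∑ i, ∑ j, ∑ l, ∑ m, isoTensor n lam mu i j l m * v i * w j * v l * w m
      = lam * (∑ i, v i * w i) ^ 2
        + mu * ((∑ i, v i ^ 2) * (∑ i, w i ^ 2) + (∑ i, v i * w i) ^ 2) := by
  simp only [isoTensor, kron, add_mul, mul_add, sum_add_distrib, mul_ite, ite_mul, mul_one,
    mul_zero, zero_mul, sum_ite_eq, mem_univ, if_true, sum_ite_irrel, sum_const_zero]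
  rw [sq, sum_mul_sum, sum_mul_sum]
  simp only [mul_sum, ← sum_add_distrib]
  exact Fintype.sum_congr _ _ fun i => Fintype.sum_congr _ _ fun j => by ring

/-- positivity estimate for the two-point isotropic tensor.
With `λ := k − 2μ/n` and `k, μ ≥ c₀ > 0`, for all `x, y` and vectors `v, w`:
`C^{1/2}(x) : C^{1/2}(y)` contracted four times with `v, w, v, w` equals
`(n k(x)k(y) + (2(n−2)/n) μ(x)μ(y)) (v·w)² + 2μ(x)μ(y)|v|²|w|² ≥ 2c₀²|v|²|w|²`. -/
theorem isoTensor_positivity (n : ℕ) (hn : 2 ≤ n) (c₀ : ℝ) (hc₀ : 0 < c₀)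
    (k μ : (Fin n → ℝ) → ℝ) (hk : ∀ x, c₀ ≤ k x) (hμ : ∀ x, c₀ ≤ μ x)
    (x y : Fin n → ℝ) (v w : Fin n → ℝ) :
    (∑ i, ∑ j, ∑ l, ∑ m,
        (∑ α, ∑ β,
          isoTensor n (k x - 2 * μ x / n) (μ x) i j α β *
            isoTensor n (k y - 2 * μ y / n) (μ y) α β l m)
          * v i * w j * v l * w m
      = ((n : ℝ) * k x * k y + (2 * ((n : ℝ) - 2) / n) * μ x * μ y)
          * (∑ i, v i * w i) ^ 2
        + 2 * μ x * μ y * (∑ i, v i ^ 2) * (∑ i, w i ^ 2)) ∧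
    2 * c₀ ^ 2 * (∑ i, v i ^ 2) * (∑ i, w i ^ 2)
      ≤ ∑ i, ∑ j, ∑ l, ∑ m,
          (∑ α, ∑ β,
            isoTensor n (k x - 2 * μ x / n) (μ x) i j α β *
              isoTensor n (k y - 2 * μ y / n) (μ y) α β l m)
            * v i * w j * v l * w m := by
  have hn2 : (2 : ℝ) ≤ n := by exact_mod_cast hn
  have hcoeff : n * (k x - 2 * μ x / n) * (k y - 2 * μ y / n) + 2 * (k x - 2 * μ x / n) * μ y
      + 2 * μ x * (k y - 2 * μ y / n) + 2 * μ x * μ y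
      = n * k x * k y + 2 * (n - 2) / n * μ x * μ y := by
    field_simp
    ring
  simp_rw [isoTensor_contract, sum_isoTensor_mul]
  refine ⟨by linear_combination (∑ i, v i * w i) ^ 2 * hcoeff, ?_⟩
  have hkx := hc₀.le.trans (hk x)
  have hky := hc₀.le.trans (hk y)
  have hμx := hc₀.le.trans (hμ x)
  have hμy := hc₀.le.trans (hμ y)
  have hμμ : c₀ ^ 2 ≤ μ x * μ y := by
    rw [sq]
    exact mul_le_mul (hμ x) (hμ y) hc₀.le hμx
  have hcoeff_nonneg : 0 ≤ n * k x * k y + 2 * (n - 2) / n * μ x * μ y := by positivity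
  rw [← hcoeff] at hcoeff_nonneg
  have hV : 0 ≤ ∑ i, v i ^ 2 := sum_nonneg fun i _ => sq_nonneg (v i)
  have hW : 0 ≤ ∑ i, w i ^ 2 := sum_nonneg fun i _ => sq_nonneg (w i)
  linear_combination 2 * mul_le_mul_of_nonneg_right hμμ (mul_nonneg hV hW)
    + mul_nonneg hcoeff_nonneg (sq_nonneg (∑ i, v i * w i))
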